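/- Assume the Coxeter number h is even. Then there exists a unique ordered partition Π = Π₁ ⊔ Π₂ of the set of simple roots such that (i) for k = 1,2, any two distinct simple roots in Π_k are orthogonal, and (ii) every simple root in Π₂ is orthogonal to the highest root ψ. -/

import Mathlib

open scoped RealInnerProductSpace

/-- Reflection of a real inner product space in the hyperplane orthogonal to `v`,
i.e. the orthogonal reflection fixing `(ℝ ∙ v)ᗮ` and sending `v` to `-v`. -/
noncomputable def rootReflection {V : Type*} [NormedAddCommGroup V] [InnerProductSpace ℝ V]
    [FiniteDimensional ℝ V] (v : V) : V ≃ₗᵢ[ℝ] V :=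
  Submodule.reflection ((ℝ ∙ v)ᗮ)

/-- The orbit of `v` under the cyclic group generated by `σ`. -/
def cyclicOrbit {V : Type*} [NormedAddCommGroup V] [InnerProductSpace ℝ V]
    (σ : V ≃ₗᵢ[ℝ] V) (v : V) : Set V :=
  {x | ∃ m : ℤ, (σ ^ m) v = x}

/-!
The Dynkin diagram of the base (simple roots as vertices, non-orthogonal pairs as edges) is
connected, by irreducibility, and has no cycle, since the sum of the simple roots along a cycle
would have nonpositive squared length. So it has a proper 2-colouring, unique up to swapping the
colours, and the partitions in question are the pairs of colour classes whose second class avoids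
the simple roots not orthogonal to `ψ`. It remains to see that these roots all have the same colour.

Write `ψ = ∑ mᵢ αᵢ` and let `r` be the squared length of the roots. Then every `mᵢ ≥ 1`, each
`⟪αᵢ, ψ⟫` is `0` or `r / 2`, and `r = ⟪ψ, ψ⟫ = ∑ mᵢ ⟪αᵢ, ψ⟫`, so at most two simple roots are not
orthogonal to `ψ`. If there are two, `αᵢ` and `αⱼ`, then `mᵢ = mⱼ = 1` and `2 m - A m` is the
indicator of `{i, j}` (`A` the adjacency matrix); this forces the diagram to be a path from `i`
to `j`, so `Δ` has type `A_ℓ` and `ℓ (ℓ + 1)` roots. Hence `h = ℓ + 1`, and when `h` is even the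
path has an even number `ℓ - 1` of edges, so its two ends have the same colour.
-/

open Finset

section LinearCombination

variable {M : Type*} [AddCommGroup M] [Module ℝ M] {ι : Type*} [Fintype ι]

def IsNatComb (α : ι → M) (x : M) : Prop :=
  ∃ c : ι → ℕ, x = ∑ i, (c i : ℝ) • α i

theorem isNatComb_self (α : ι → M) (i : ι) : IsNatComb α (α i) := by
  classical
  exact ⟨Pi.single i 1, by simp [Pi.single_apply, ite_smul]⟩

theorem IsNatComb.add {α : ι → M} {x y : M} (hx : IsNatComb α x) (hy : IsNatComb α y) :
    IsNatComb α (x + y) := by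
  obtain ⟨c, rfl⟩ := hx
  obtain ⟨d, rfl⟩ := hy
  exact ⟨c + d, by simp [add_smul, sum_add_distrib]⟩

theorem IsNatComb.nonneg_of_eq_sum {α : ι → M} (hα : LinearIndependent ℝ α) {x : M}
    (hx : IsNatComb α x) {a : ι → ℝ} (ha : x = ∑ i, a i • α i) (i : ι) : 0 ≤ a i := by
  obtain ⟨c, hc⟩ := hx
  rw [← Fintype.linearIndependent_iffₛ.mp hα _ _ (hc.symm.trans ha) i]
  exact Nat.cast_nonneg _

theorem IsNatComb.eq_zero_of_neg {α : ι → M} (hα : LinearIndependent ℝ α) {x : M}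
    (hx : IsNatComb α x) (hnx : IsNatComb α (-x)) : x = 0 := by
  obtain ⟨c, rfl⟩ := hx
  have hc (i : ι) : (c i : ℝ) = 0 := by
    have := hnx.nonneg_of_eq_sum hα (a := fun i => -(c i : ℝ)) (by simp [sum_neg_distrib]) i
    linarith [(Nat.cast_nonneg (c i) : (0 : ℝ) ≤ c i)]
  simp [hc]

theorem LinearIndependent.finset_eq_of_sum_eq {v : ι → M} (hv : LinearIndependent ℝ v)
    {s t : Finset ι} (h : ∑ i ∈ s, v i = ∑ i ∈ t, v i) : s = t := by
  classical
  have hind := Fintype.linearIndependent_iffₛ.mp hv (fun i => if i ∈ s then 1 else 0)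
    (fun i => if i ∈ t then 1 else 0) (by simpa [ite_smul, sum_ite_mem] using h)
  ext i
  have := hind i
  split_ifs at this <;> simp_all

end LinearCombination

section PartialSum

variable {M : Type*} [AddCommGroup M] {n : ℕ} {β : Fin n → M}

def partialSum (β : Fin n → M) (a : ℕ) : M := ∑ t : Fin n with t.val < a, β t

theorem partialSum_zero : partialSum β 0 = 0 := by simp [partialSum]

theorem partialSum_succ (t : Fin n) : partialSum β (t + 1) = partialSum β t + β t := by
  have : univ.filter (fun s : Fin n => s.val < t + 1) =
      insert t (univ.filter fun s : Fin n => s.val < t) := by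
    ext s
    simp [Fin.ext_iff]
    omega
  rw [partialSum, this, sum_insert (by simp), add_comm, partialSum]

theorem partialSum_sub_partialSum {a b : ℕ} (hab : a ≤ b) :
    partialSum β b - partialSum β a = ∑ t : Fin n with a ≤ t.val ∧ t.val < b, β t := by
  rw [sub_eq_iff_eq_add', partialSum, partialSum, ← sum_filter_add_sum_filter_not _
    (fun t : Fin n => t.val < a), filter_filter, filter_filter]
  congr 2 <;> ext t <;> simp only [mem_filter, mem_univ, true_and] <;> omega

variable [Module ℝ M]

theorem isNatComb_partialSum_sub {a b : ℕ} (hab : a ≤ b) :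
    IsNatComb β (partialSum β b - partialSum β a) := by
  classical
  refine ⟨fun t => if a ≤ t.val ∧ t.val < b then 1 else 0, ?_⟩
  rw [partialSum_sub_partialSum hab, sum_filter]
  simp [ite_smul]

variable (hβ : LinearIndependent ℝ β)
include hβ

theorem partialSum_sub_inj {a b c d : ℕ} (hab : a < b) (hb : b ≤ n) (hcd : c < d) (hd : d ≤ n)
    (h : partialSum β b - partialSum β a = partialSum β d - partialSum β c) : a = c ∧ b = d := by
  rw [partialSum_sub_partialSum hab.le, partialSum_sub_partialSum hcd.le] at h
  have hmem (t : ℕ) (ht : t < n) : a ≤ t ∧ t < b ↔ c ≤ t ∧ t < d := by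
    simpa using Finset.ext_iff.mp (hβ.finset_eq_of_sum_eq h) ⟨t, ht⟩
  have h1 := (hmem a (by omega)).mp ⟨le_rfl, hab⟩
  have h2 := (hmem c (by omega)).mpr ⟨le_rfl, hcd⟩
  have h3 := (hmem (b - 1) (by omega)).mp ⟨by omega, by omega⟩
  have h4 := (hmem (d - 1) (by omega)).mpr ⟨by omega, by omega⟩
  omega

theorem partialSum_sub_ne_partialSum_sub {a b c d : ℕ} (hab : a < b) (hb : b ≤ n) (hdc : d < c) :
    partialSum β b - partialSum β a ≠ partialSum β d - partialSum β c := by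
  intro h
  have hzero := (isNatComb_partialSum_sub hab.le).eq_zero_of_neg hβ
    (by rw [h, neg_sub]; exact isNatComb_partialSum_sub hdc.le)
  rw [partialSum_sub_partialSum hab.le, ← sum_empty (f := β)] at hzero
  have := Finset.ext_iff.mp (hβ.finset_eq_of_sum_eq hzero) ⟨a, by omega⟩
  simp [hab] at this

theorem injOn_partialSum_sub :
    Set.InjOn (fun p : Fin (n + 1) × Fin (n + 1) => partialSum β p.2 - partialSum β p.1)
      (univ : Finset (Fin (n + 1))).offDiag := by
  rintro ⟨a, b⟩ hp ⟨c, d⟩ hq h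
  simp only [coe_offDiag, coe_univ, Set.mem_offDiag, Set.mem_univ, true_and, ne_eq,
    Fin.ext_iff] at hp hq
  simp only at h
  rcases lt_or_gt_of_ne hp with hab | hab <;> rcases lt_or_gt_of_ne hq with hcd | hcd
  · obtain ⟨h1, h2⟩ := partialSum_sub_inj hβ hab (by omega) hcd (by omega) h
    simp [Fin.ext_iff, h1, h2]
  · exact absurd h (partialSum_sub_ne_partialSum_sub hβ hab (by omega) hcd)
  · exact absurd h.symm (partialSum_sub_ne_partialSum_sub hβ hcd (by omega) hab)
  · rw [← neg_sub (partialSum β a), ← neg_sub (partialSum β c), neg_inj] at h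
    obtain ⟨h1, h2⟩ := partialSum_sub_inj hβ hab (by omega) hcd (by omega) h
    simp [Fin.ext_iff, h1, h2]

end PartialSum

theorem Finset.eq_of_subset_of_sum_le_card {α : Type*} {s t : Finset α} {m : α → ℕ}
    (hst : s ⊆ t) (hm : ∀ x ∈ t, 1 ≤ m x) (hsum : ∑ x ∈ t, m x ≤ #s) :
    s = t ∧ ∀ x ∈ t, m x = 1 := by
  have hle : ∑ x ∈ t, 1 ≤ ∑ x ∈ t, m x := sum_le_sum hm
  have hcard : #s ≤ #t := card_le_card hst
  rw [← card_eq_sum_ones] at hle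
  refine ⟨eq_of_subset_of_card_le hst (by omega), fun x hx => ?_⟩
  have heq : ∑ x ∈ t, 1 = ∑ x ∈ t, m x := by rw [← card_eq_sum_ones]; omega
  exact ((sum_eq_sum_iff_of_le hm).mp heq x hx).symm

def pathNeighbors (n t : ℕ) : Finset ℕ := {s ∈ range (n + 1) | s + 1 = t ∨ t + 1 = s}

theorem mem_pathNeighbors {n t s : ℕ} :
    s ∈ pathNeighbors n t ↔ s ≤ n ∧ (s + 1 = t ∨ t + 1 = s) := by
  simp [pathNeighbors]

theorem two_le_card_pathNeighbors_add {n t : ℕ} (hn : 1 ≤ n) (ht : t ≤ n) :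
    2 ≤ #(pathNeighbors n t) + if t = 0 ∨ t = n then 1 else 0 := by
  split_ifs with hte
  · suffices 0 < #(pathNeighbors n t) by omega
    exact card_pos.mpr ⟨if t = 0 then 1 else n - 1, mem_pathNeighbors.mpr (by split_ifs <;> omega)⟩
  · rw [add_zero]
    calc 2 = #({t - 1, t + 1} : Finset ℕ) := (card_pair (by omega)).symm
      _ ≤ #(pathNeighbors n t) := card_le_card fun s hs => by
        rw [mem_insert, mem_singleton] at hs
        rw [mem_pathNeighbors]
        omega

namespace SimpleGraph

variable {W : Type*} {G : SimpleGraph W}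

theorem Preconnected.eq_univ_of_adj_closed (hG : G.Preconnected) {S : Set W} {a : W} (ha : a ∈ S)
    (hS : ∀ x ∈ S, ∀ y, G.Adj x y → y ∈ S) : S = Set.univ := by
  refine Set.eq_univ_of_forall fun b => ?_
  induction (reachable_iff_reflTransGen a b).mp (hG a b) with
  | refl => exact ha
  | tail _ hadj ih => exact hS _ ih _ hadj

theorem Coloring.eq_iff_eq_of_preconnected (hG : G.Preconnected) (C D : G.Coloring Bool)
    (a x : W) : C x = C a ↔ D x = D a := by
  obtain ⟨p⟩ := hG a x
  have hC := C.even_length_iff_congr p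
  have hD := D.even_length_iff_congr p
  rw [Bool.coe_iff_coe] at hC hD
  rw [eq_comm, ← hC, hD, eq_comm]

theorem existsUnique_partition_of_coloring [Fintype W] [DecidableEq W] (hG : G.Preconnected)
    (C : G.Coloring Bool) {S : Set W} {a : W} (ha : a ∈ S) (hS : ∀ x ∈ S, C x = C a) :
    ∃! p : Finset W × Finset W, p.1 ∪ p.2 = Finset.univ ∧ Disjoint p.1 p.2 ∧
      (∀ x ∈ p.1, ∀ y ∈ p.1, ¬G.Adj x y) ∧ (∀ x ∈ p.2, ∀ y ∈ p.2, ¬G.Adj x y) ∧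
      ∀ x ∈ p.2, x ∉ S := by
  refine ⟨(({x | C x = C a} : Finset W), ({x | C x ≠ C a} : Finset W)),
    ⟨filter_union_filter_not_eq _ _, disjoint_filter_filter_not _ _ _, ?_, ?_, ?_⟩, ?_⟩
  · simp only [Finset.mem_filter, Finset.mem_univ, true_and]
    exact fun x hx y hy hxy => C.valid hxy (hx.trans hy.symm)
  · simp only [Finset.mem_filter, Finset.mem_univ, true_and]
    intro x hx y hy hxy
    exact C.valid hxy (by cases h : C a <;> simp_all)
  · simp only [Finset.mem_filter, Finset.mem_univ, true_and]
    exact fun x hx hxS => hx (hS x hxS)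
  rintro ⟨q₁, q₂⟩ ⟨hcover, hdisj, h₁, h₂, hq₂⟩
  have hmem₂ {x : W} (hx : x ∉ q₁) : x ∈ q₂ := by
    have h := Finset.mem_univ x
    rw [← hcover] at h
    simpa [hx] using h
  let D : G.Coloring Bool := Coloring.mk (fun x => decide (x ∈ q₁)) fun {x y} hxy => by
    by_cases hx : x ∈ q₁ <;> by_cases hy : y ∈ q₁
    · exact absurd hxy (h₁ x hx y hy)
    · simp [hx, hy]
    · simp [hx, hy]
    · exact absurd hxy (h₂ x (hmem₂ hx) y (hmem₂ hy))
  have haq : a ∈ q₁ := by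
    by_contra h
    exact hq₂ a (hmem₂ h) ha
  have hq₁ (x : W) : x ∈ q₁ ↔ C x = C a := by
    rw [Coloring.eq_iff_eq_of_preconnected hG C D]
    show x ∈ q₁ ↔ decide (x ∈ q₁) = decide (a ∈ q₁)
    simp [haq]
  have heq₁ : q₁ = ({x | C x = C a} : Finset W) := by ext x; simp [hq₁]
  refine Prod.ext heq₁ ?_
  ext x
  rw [Finset.mem_filter, ne_eq, ← hq₁]
  simp only [Finset.mem_univ, true_and]
  exact ⟨fun hx h => Finset.disjoint_left.mp hdisj h hx, hmem₂⟩

section Path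

variable [Fintype W] [DecidableEq W] [DecidableRel G.Adj] {m : W → ℕ} {i j : W} {p : G.Walk i j}

-- The hypotheses on `m` say that `2 m - A m` is the indicator of `{i, j}`, `A` the adjacency
-- matrix (this is the shape of the highest root of type `A`). Walking along `p` from `i`, this
-- equation at each vertex forces its neighbours to be exactly its two neighbours on `p`.
theorem Walk.IsPath.neighborFinset_getVert (hp : p.IsPath) (hm_pos : ∀ k, 1 ≤ m k) (hij : i ≠ j)
    (hmi : m i = 1)
    (hm : ∀ k, ∑ l ∈ G.neighborFinset k, m l + (if k = i ∨ k = j then 1 else 0) = 2 * m k)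
    {t : ℕ} (ht : t ≤ p.length) :
    G.neighborFinset (p.getVert t) = (pathNeighbors p.length t).image p.getVert := by
  have hn : 1 ≤ p.length := by
    by_contra! h0
    have h := p.getVert_length
    rw [show p.length = 0 by omega, p.getVert_zero] at h
    exact hij h
  have hend {t : ℕ} (ht : t ≤ p.length) :
      (p.getVert t = i ∨ p.getVert t = j) ↔ (t = 0 ∨ t = p.length) := by
    have h0 : p.getVert 0 = i := p.getVert_zero
    have hn' : p.getVert p.length = j := p.getVert_length
    constructor
    · rintro (h | h)
      exacts [Or.inl (hp.getVert_injOn ht (Nat.zero_le _) (h.trans h0.symm)),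
        Or.inr (hp.getVert_injOn ht (show p.length ≤ p.length from le_rfl)
          (h.trans hn'.symm))]
    · rintro (rfl | rfl)
      exacts [Or.inl h0, Or.inr hn']
  have hsub {t : ℕ} (ht : t ≤ p.length) :
      (pathNeighbors p.length t).image p.getVert ⊆ G.neighborFinset (p.getVert t) := by
    simp only [image_subset_iff, mem_pathNeighbors, mem_neighborFinset]
    rintro s ⟨hs, rfl | rfl⟩
    exacts [(p.adj_getVert_succ (by omega)).symm, p.adj_getVert_succ (by omega)]
  have hstep {t : ℕ} (ht : t ≤ p.length) (h1 : m (p.getVert t) = 1) :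
      (pathNeighbors p.length t).image p.getVert = G.neighborFinset (p.getVert t) ∧
        ∀ l ∈ G.neighborFinset (p.getVert t), m l = 1 := by
    refine eq_of_subset_of_sum_le_card (hsub ht) (fun l _ => hm_pos l) ?_
    have hsum := hm (p.getVert t)
    have hcard := two_le_card_pathNeighbors_add hn ht
    rw [card_image_of_injOn fun s hs s' hs' h => hp.getVert_injOn
      (mem_pathNeighbors.mp hs).1 (mem_pathNeighbors.mp hs').1 h]
    simp only [hend ht, h1] at hsum
    omega
  have hm1 {t : ℕ} (ht : t ≤ p.length) : m (p.getVert t) = 1 := by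
    induction t with
    | zero => rwa [p.getVert_zero]
    | succ t ih =>
      refine (hstep (by omega) (ih (by omega))).2 _ (hsub (by omega) ?_)
      exact mem_image_of_mem _ (mem_pathNeighbors.mpr ⟨by omega, by omega⟩)
  exact (hstep ht (hm1 ht)).1.symm

theorem Walk.IsPath.nonempty_iso_pathGraph (hG : G.Preconnected) (hp : p.IsPath)
    (hm_pos : ∀ k, 1 ≤ m k) (hij : i ≠ j) (hmi : m i = 1)
    (hm : ∀ k, ∑ l ∈ G.neighborFinset k, m l + (if k = i ∨ k = j then 1 else 0) = 2 * m k) :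
    Nonempty (pathGraph (p.length + 1) ≃g G) := by
  have hnbrs {t : ℕ} (ht : t ≤ p.length) := hp.neighborFinset_getVert hm_pos hij hmi hm ht
  have hadj {s t : ℕ} (hs : s ≤ p.length) (ht : t ≤ p.length) :
      G.Adj (p.getVert s) (p.getVert t) ↔ s + 1 = t ∨ t + 1 = s := by
    rw [← mem_neighborFinset, hnbrs hs, mem_image]
    constructor
    · rintro ⟨u, hu, hut⟩
      rw [← hp.getVert_injOn (mem_pathNeighbors.mp hu).1 ht hut]
      exact (mem_pathNeighbors.mp hu).2.symm
    · exact fun h => ⟨t, mem_pathNeighbors.mpr ⟨ht, h.symm⟩, rfl⟩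
  have hsurj : {x | ∃ t ≤ p.length, p.getVert t = x} = Set.univ := by
    refine hG.eq_univ_of_adj_closed ⟨0, Nat.zero_le _, rfl⟩ ?_
    rintro _ ⟨t, ht, rfl⟩ y hy
    rw [← mem_neighborFinset, hnbrs ht] at hy
    obtain ⟨s, hs, rfl⟩ := mem_image.mp hy
    exact ⟨s, (mem_pathNeighbors.mp hs).1, rfl⟩
  have hbij : Function.Bijective fun t : Fin (p.length + 1) => p.getVert t := by
    refine ⟨fun s t h => Fin.ext (hp.getVert_injOn (Nat.lt_succ_iff.mp s.isLt)
      (Nat.lt_succ_iff.mp t.isLt) h), fun x => ?_⟩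
    obtain ⟨t, ht, rfl⟩ := Set.eq_univ_iff_forall.mp hsurj x
    exact ⟨⟨t, by omega⟩, rfl⟩
  exact ⟨⟨Equiv.ofBijective _ hbij, fun {s t} => by
    simpa [pathGraph_adj] using hadj (Nat.lt_succ_iff.mp s.isLt) (Nat.lt_succ_iff.mp t.isLt)⟩⟩

end Path

end SimpleGraph

section RootSystem

variable {V : Type*} [NormedAddCommGroup V] [InnerProductSpace ℝ V]

theorem rootReflection_apply [FiniteDimensional ℝ V] (v x : V) :
    rootReflection v x = x - (2 * ⟪v, x⟫ / ⟪v, v⟫) • v := by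
  rcases eq_or_ne v 0 with rfl | hv
  · have hx : ((⊤ : Submodule ℝ V).starProjection x : V) = x :=
      Submodule.starProjection_eq_self_iff.mpr trivial
    simp [rootReflection, Submodule.span_zero_singleton, Submodule.reflection_apply, hx, two_smul]
  · rw [rootReflection, Submodule.reflection_apply, Submodule.starProjection_orthogonal_val,
      Submodule.starProjection_singleton, real_inner_self_eq_norm_sq]
    norm_cast
    match_scalars <;> (try simp only [RCLike.ofReal_real_eq_id, id_eq]) <;> ring

def dynkinGraph {ι : Type*} (α : ι → V) : SimpleGraph ι where
  Adj i j := i ≠ j ∧ ⟪α i, α j⟫ ≠ 0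
  symm := ⟨fun _ _ h => ⟨h.1.symm, by rw [real_inner_comm]; exact h.2⟩⟩
  loopless := ⟨fun _ h => h.1 rfl⟩

theorem dynkinGraph_adj {ι : Type*} {α : ι → V} {i j : ι} :
    (dynkinGraph α).Adj i j ↔ i ≠ j ∧ ⟪α i, α j⟫ ≠ 0 := Iff.rfl

noncomputable instance {ι : Type*} (α : ι → V) : DecidableRel (dynkinGraph α).Adj :=
  Classical.decRel _

structure SimplyLacedBase [FiniteDimensional ℝ V] {ι : Type*} [Fintype ι]
    (Δ : Finset V) (α : ι → V) (r : ℝ) : Prop where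
  zero_notMem : (0 : V) ∉ Δ
  reflection_mem : ∀ φ ∈ Δ, ∀ θ ∈ Δ, rootReflection φ θ ∈ Δ
  exists_int : ∀ φ ∈ Δ, ∀ θ ∈ Δ, ∃ m : ℤ, 2 * ⟪φ, θ⟫ / ⟪φ, φ⟫ = m
  inner_self : ∀ φ ∈ Δ, ⟪φ, φ⟫ = r
  irreducible : ∀ A B : Set V, (Δ : Set V) = A ∪ B → (∀ a ∈ A, ∀ b ∈ B, ⟪a, b⟫ = 0) →
    A = ∅ ∨ B = ∅
  mem : ∀ i, α i ∈ Δ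
  linearIndependent : LinearIndependent ℝ α
  isNatComb_or : ∀ φ ∈ Δ, IsNatComb α φ ∨ IsNatComb α (-φ)

namespace SimplyLacedBase

section Base

variable [FiniteDimensional ℝ V] {ι : Type*} [Fintype ι] {Δ : Finset V} {α : ι → V} {r : ℝ}
  (hB : SimplyLacedBase Δ α r)
include hB

theorem r_pos {φ : V} (hφ : φ ∈ Δ) : 0 < r := by
  rw [← hB.inner_self φ hφ, real_inner_self_eq_norm_sq]
  have : φ ≠ 0 := fun h => hB.zero_notMem (h ▸ hφ)
  positivity

theorem reflection_eq {φ θ : V} (hφ : φ ∈ Δ) :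
    rootReflection φ θ = θ - (2 * ⟪φ, θ⟫ / r) • φ := by
  rw [rootReflection_apply, hB.inner_self φ hφ]

theorem neg_mem {φ : V} (hφ : φ ∈ Δ) : -φ ∈ Δ := by
  have := hB.reflection_mem φ hφ φ hφ
  rwa [hB.reflection_eq hφ, hB.inner_self φ hφ, mul_div_assoc, div_self (hB.r_pos hφ).ne',
    mul_one, two_smul, sub_add_eq_sub_sub, sub_self, zero_sub] at this

theorem sub_mem_of_inner_eq {φ θ : V} (hφ : φ ∈ Δ) (hθ : θ ∈ Δ) (h : ⟪φ, θ⟫ = r / 2) :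
    θ - φ ∈ Δ := by
  have := hB.reflection_mem φ hφ θ hθ
  rwa [hB.reflection_eq hφ, h, mul_div_cancel₀ _ two_ne_zero, div_self (hB.r_pos hφ).ne',
    one_smul] at this

theorem add_mem_of_inner_eq {φ θ : V} (hφ : φ ∈ Δ) (hθ : θ ∈ Δ) (h : ⟪φ, θ⟫ = -(r / 2)) :
    θ + φ ∈ Δ := by
  simpa using hB.sub_mem_of_inner_eq (hB.neg_mem hφ) hθ (by rw [inner_neg_left, h, neg_neg])

theorem inner_eq_neg_half_of_add_mem {φ θ : V} (hφ : φ ∈ Δ) (hθ : θ ∈ Δ) (h : φ + θ ∈ Δ) :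
    ⟪φ, θ⟫ = -(r / 2) := by
  have := real_inner_add_add_self φ θ
  rw [hB.inner_self _ h, hB.inner_self _ hφ, hB.inner_self _ hθ] at this
  linarith

-- For distinct roots, integrality and Cauchy–Schwarz leave `2⟪φ, θ⟫ / r = 1` as the only
-- positive value.
theorem inner_eq_half_of_pos {φ θ : V} (hφ : φ ∈ Δ) (hθ : θ ∈ Δ) (hne : φ ≠ θ)
    (hpos : 0 < ⟪φ, θ⟫) : ⟪φ, θ⟫ = r / 2 := by
  obtain ⟨m, hm⟩ := hB.exists_int φ hφ θ hθ
  rw [hB.inner_self φ hφ] at hm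
  have hr := hB.r_pos hφ
  have hlt : ⟪φ, θ⟫ < r := by
    have h1 : 0 < ⟪θ - φ, θ - φ⟫ := real_inner_self_pos.mpr (sub_ne_zero.mpr hne.symm)
    rw [inner_sub_sub_self, hB.inner_self _ hφ, hB.inner_self _ hθ, real_inner_comm φ θ] at h1
    linarith
  have h0 : (0 : ℝ) < m := by rw [← hm]; positivity
  have h2 : (m : ℝ) < 2 := by rw [← hm, div_lt_iff₀ hr]; linarith
  have hm1 : m = 1 := by
    have : 0 < m := by exact_mod_cast h0
    have : m < 2 := by exact_mod_cast h2
    omega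
  rw [hm1, Int.cast_one, div_eq_one_iff_eq hr.ne'] at hm
  linarith

theorem inner_simple_nonpos [DecidableEq ι] {i j : ι} (hij : i ≠ j) : ⟪α i, α j⟫ ≤ 0 := by
  by_contra! hpos
  have hne : α i ≠ α j := hB.linearIndependent.injective.ne hij
  have hmem := hB.sub_mem_of_inner_eq (hB.mem i) (hB.mem j)
    (hB.inner_eq_half_of_pos (hB.mem i) (hB.mem j) hne hpos)
  have hsum : α j - α i = ∑ k, ((Pi.single j 1 : ι → ℝ) k - (Pi.single i 1 : ι → ℝ) k) • α k := by
    simp [sub_smul, sum_sub_distrib, Pi.single_apply, ite_smul]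
  rcases hB.isNatComb_or _ hmem with h | h
  · have := h.nonneg_of_eq_sum hB.linearIndependent hsum i
    norm_num [hij] at this
  · have := h.nonneg_of_eq_sum hB.linearIndependent
      (a := fun k => (Pi.single i 1 : ι → ℝ) k - (Pi.single j 1 : ι → ℝ) k)
      (by rw [hsum, ← sum_neg_distrib]; simp [sub_smul]) j
    norm_num [hij.symm] at this

theorem inner_simple_of_adj {i j : ι} (h : (dynkinGraph α).Adj i j) :
    ⟪α i, α j⟫ = -(r / 2) := by
  classical
  have hneg : 0 < ⟪α i, -α j⟫ := by
    rw [inner_neg_right, neg_pos]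
    exact lt_of_le_of_ne (hB.inner_simple_nonpos h.1) h.2
  have hne : α i ≠ -α j := fun heq => hB.zero_notMem <| by
    have := (isNatComb_self α i).eq_zero_of_neg hB.linearIndependent
      (by rw [heq, neg_neg]; exact isNatComb_self α j)
    exact this ▸ hB.mem i
  have := hB.inner_eq_half_of_pos (hB.mem i) (hB.neg_mem (hB.mem j)) hne hneg
  rw [inner_neg_right] at this
  linarith

theorem inner_simple_eq_ite [DecidableEq ι] (i j : ι) :
    ⟪α i, α j⟫ = if i = j then r else if (dynkinGraph α).Adj i j then -(r / 2) else 0 := by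
  split_ifs with hij hadj
  · exact hij ▸ hB.inner_self _ (hB.mem i)
  · exact hB.inner_simple_of_adj hadj
  · simpa [dynkinGraph_adj, hij] using hadj

theorem inner_simple_sum_smul (k : ι) (c : ι → ℝ) :
    ⟪α k, ∑ l, c l • α l⟫ = r * c k - r / 2 * ∑ l ∈ (dynkinGraph α).neighborFinset k, c l := by
  classical
  have hterm (l : ι) : ⟪α k, c l • α l⟫ = (if l = k then r * c l else 0) +
      (if (dynkinGraph α).Adj k l then -(r / 2) * c l else 0) := by
    rw [real_inner_smul_right, hB.inner_simple_eq_ite]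
    by_cases hlk : l = k
    · subst hlk; simp [mul_comm]
    · simp [hlk, Ne.symm hlk]
      split_ifs <;> ring
  simp only [inner_sum, hterm, sum_add_distrib, sum_ite_eq', mem_univ, if_true,
    ← sum_filter, SimpleGraph.neighborFinset_eq_filter, ← mul_sum]
  ring

theorem sum_coeff_mul_inner_eq {φ : V} (hφ : φ ∈ Δ) {c : ι → ℕ}
    (hc : φ = ∑ i, (c i : ℝ) • α i) : ∑ k, (c k : ℝ) * ⟪α k, φ⟫ = r := by
  rw [← hB.inner_self φ hφ]
  nth_rewrite 2 [hc]
  rw [sum_inner]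
  simp only [real_inner_smul_left]

-- By `sum_coeff_mul_inner_eq`, some `α i` occurring in `φ` has `⟪α i, φ⟫ > 0`, hence `= r / 2`.
theorem exists_sub_simple_mem {φ : V} (hφ : φ ∈ Δ) {c : ι → ℕ} (hc : φ = ∑ i, (c i : ℝ) • α i)
    (hsimple : ∀ i, φ ≠ α i) : ∃ i, 1 ≤ c i ∧ φ - α i ∈ Δ := by
  obtain ⟨i, hi⟩ : ∃ i, 0 < (c i : ℝ) * ⟪α i, φ⟫ := by
    by_contra! h
    linarith [hB.r_pos hφ, hB.sum_coeff_mul_inner_eq hφ hc, sum_nonpos fun i (_ : i ∈ univ) => h i]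
  have hpos : 0 < ⟪α i, φ⟫ := pos_of_mul_pos_right hi (Nat.cast_nonneg _)
  refine ⟨i, ?_, hB.sub_mem_of_inner_eq (hB.mem i) hφ
    (hB.inner_eq_half_of_pos (hB.mem i) hφ (hsimple i).symm hpos)⟩
  by_contra! h0
  simp [Nat.lt_one_iff.mp h0] at hi

theorem isNatComb_induction {P : V → Prop} (simple : ∀ i, P (α i))
    (step : ∀ φ ∈ Δ, ∀ i, φ - α i ∈ Δ → IsNatComb α (φ - α i) → P (φ - α i) → P φ) :
    ∀ φ ∈ Δ, IsNatComb α φ → P φ := by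
  classical
  suffices key : ∀ N, ∀ c : ι → ℕ, ∑ i, c i = N →
      ∀ φ ∈ Δ, φ = ∑ i, (c i : ℝ) • α i → P φ by
    rintro φ hφ ⟨c, hc⟩
    exact key _ c rfl φ hφ hc
  intro N
  induction N using Nat.strong_induction_on with
  | _ N ih =>
  rintro c rfl φ hφ hc
  by_cases hsimple : ∃ i, φ = α i
  · obtain ⟨i, rfl⟩ := hsimple
    exact simple i
  obtain ⟨i, hci, hmem⟩ := hB.exists_sub_simple_mem hφ hc (by simpa using hsimple)
  set d : ι → ℕ := c - (Pi.single i 1 : ι → ℕ)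
  have hcd (k : ι) : c k = d k + (Pi.single i 1 : ι → ℕ) k := by
    by_cases hk : k = i
    · subst hk; simp [d]; omega
    · simp [d, hk]
  have hd : φ - α i = ∑ k, (d k : ℝ) • α k := by
    rw [hc, sub_eq_iff_eq_add]
    simp only [hcd, Nat.cast_add, add_smul, sum_add_distrib]
    simp [Pi.single_apply, ite_smul]
  have hlt : ∑ k, d k < ∑ k, c k := by
    simp only [hcd, sum_add_distrib, Fintype.sum_pi_single', lt_add_one]
  exact step φ hφ i hmem ⟨d, hd⟩ (ih _ hlt d rfl _ hmem hd)

theorem eq_empty_or_univ_of_orthogonal (S : Set ι)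
    (hS : ∀ a ∈ S, ∀ b ∉ S, ⟪α a, α b⟫ = 0) : S = ∅ ∨ S = Set.univ := by
  set U := Submodule.span ℝ (α '' S)
  set W := Submodule.span ℝ (α '' Sᶜ)
  have horth : U ⟂ W := Submodule.isOrtho_span.mpr <| by
    rintro _ ⟨a, ha, rfl⟩ _ ⟨b, hb, rfl⟩
    exact hS a ha b hb
  have hU {i} (hi : i ∈ S) : α i ∈ U := Submodule.subset_span ⟨i, hi, rfl⟩
  have hW {i} (hi : i ∉ S) : α i ∈ W := Submodule.subset_span ⟨i, hi, rfl⟩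
  have hpos : ∀ φ ∈ Δ, IsNatComb α φ → φ ∈ U ∨ φ ∈ W := by
    refine hB.isNatComb_induction (fun i => ?_) fun φ hφ i hmem _ ih => ?_
    · by_cases hi : i ∈ S
      exacts [Or.inl (hU hi), Or.inr (hW hi)]
    -- `φ - α i` and `α i` are not orthogonal, so they lie on the same side
    have hinner : ⟪φ - α i, α i⟫ ≠ 0 := by
      rw [hB.inner_eq_neg_half_of_add_mem hmem (hB.mem i) (by rwa [sub_add_cancel])]
      linarith [hB.r_pos hφ]
    have hφ' : φ = (φ - α i) + α i := (sub_add_cancel φ (α i)).symm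
    by_cases hi : i ∈ S <;> rcases ih with h | h
    · exact Or.inl (hφ' ▸ U.add_mem h (hU hi))
    · have := horth.inner_eq (hU hi) h
      rw [real_inner_comm] at this
      exact absurd this hinner
    · exact absurd (horth.inner_eq h (hW hi)) hinner
    · exact Or.inr (hφ' ▸ W.add_mem h (hW hi))
  have hall : ∀ φ ∈ Δ, φ ∈ U ∨ φ ∈ W := fun φ hφ => by
    rcases hB.isNatComb_or φ hφ with h | h
    · exact hpos φ hφ h
    · simpa using hpos (-φ) (hB.neg_mem hφ) h
  rcases hB.irreducible {φ | φ ∈ Δ ∧ φ ∈ U} {φ | φ ∈ Δ ∧ φ ∈ W}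
      (Set.ext fun φ => by simp only [Set.mem_union, Set.mem_ofPred_eq, mem_coe]; grind)
      (fun _ ha _ hb => horth.inner_eq ha.2 hb.2) with h | h
  · refine Or.inl (Set.eq_empty_of_forall_notMem fun i hi => ?_)
    exact (Set.eq_empty_iff_forall_notMem.mp h) (α i) ⟨hB.mem i, hU hi⟩
  · refine Or.inr (Set.eq_univ_of_forall fun i => ?_)
    by_contra hi
    exact (Set.eq_empty_iff_forall_notMem.mp h) (α i) ⟨hB.mem i, hW hi⟩

theorem preconnected : (dynkinGraph α).Preconnected := fun a b => by
  rcases hB.eq_empty_or_univ_of_orthogonal {k | (dynkinGraph α).Reachable a k}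
      (fun x hx y hy => by
        by_contra h
        exact hy (hx.trans (SimpleGraph.Adj.reachable ⟨fun hxy => hy (hxy ▸ hx), h⟩))) with h | h
  · exact absurd (h ▸ SimpleGraph.Reachable.refl a : a ∈ (∅ : Set ι)) id
  · exact (h ▸ Set.mem_univ b : b ∈ {k | (dynkinGraph α).Reachable a k})

-- On a cycle every vertex has two neighbours in the support `S`, which would make the squared
-- norm of `∑ i ∈ S, α i` nonpositive.
theorem isAcyclic : (dynkinGraph α).IsAcyclic := by
  classical
  intro v c hc
  set S := c.support.toFinset
  have hdeg (w : ι) (hw : w ∈ S) : 2 ≤ #{x ∈ (dynkinGraph α).neighborFinset w | x ∈ S} := by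
    rw [← hc.ncard_neighborSet_toSubgraph_eq_two (List.mem_toFinset.mp hw), ← Set.ncard_coe_finset]
    refine Set.ncard_le_ncard (fun x hx => ?_) (Set.toFinite _)
    simp only [coe_filter, SimpleGraph.mem_neighborFinset, Set.mem_ofPred_eq]
    exact ⟨hx.adj_sub, List.mem_toFinset.mpr (c.mem_verts_toSubgraph.mp hx.snd_mem)⟩
  have hsum : ∑ x ∈ S, α x = ∑ l, (if l ∈ S then 1 else 0 : ℝ) • α l := by
    simp [ite_smul, sum_ite_mem]
  have hrow (w : ι) (hw : w ∈ S) : ⟪α w, ∑ x ∈ S, α x⟫ ≤ 0 := by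
    rw [hsum, hB.inner_simple_sum_smul, if_pos hw, sum_boole]
    have := hdeg w hw
    have hr := hB.r_pos (hB.mem w)
    have : (2 : ℝ) ≤ #{x ∈ (dynkinGraph α).neighborFinset w | x ∈ S} := by exact_mod_cast this
    nlinarith
  have hne : ∑ x ∈ S, α x ≠ 0 := fun h0 => by
    have := linearIndependent_iff'.mp hB.linearIndependent S (fun _ => 1) (by simpa using h0) v
      (List.mem_toFinset.mpr c.start_mem_support)
    exact one_ne_zero this
  have := real_inner_self_pos.mpr hne
  rw [sum_inner] at this
  linarith [sum_nonpos hrow]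

end Base

section TypeA

variable [FiniteDimensional ℝ V] {Δ : Finset V} {r : ℝ} {n : ℕ} {β : Fin n → V}
  (hB : SimplyLacedBase Δ β r) (hG : dynkinGraph β = SimpleGraph.pathGraph n)
include hB hG

theorem inner_eq_of_dynkinGraph_eq_pathGraph (s t : Fin n) :
    ⟪β s, β t⟫ = if s = t then r else
      if (s : ℕ) + 1 = t ∨ (t : ℕ) + 1 = s then -(r / 2) else 0 := by
  have hadj : (dynkinGraph β).Adj s t ↔ (s : ℕ) + 1 = t ∨ (t : ℕ) + 1 = s := by
    rw [hG, SimpleGraph.pathGraph_adj]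
  rw [hB.inner_simple_eq_ite]
  simp only [hadj]

theorem inner_partialSum {a : ℕ} (ha : a ≤ n) (k : Fin n) :
    ⟪partialSum β a, β k⟫ = r / 2 * ((if (k : ℕ) = 0 then 1 else 0) -
      (if a = k then 1 else 0) + (if a = k + 1 then 1 else 0)) := by
  induction a with
  | zero =>
    rw [partialSum_zero, inner_zero_left]
    by_cases hk : (k : ℕ) = 0
    · simp [hk]
    · simp [hk, Ne.symm hk]
  | succ a ih =>
    rw [partialSum_succ ⟨a, ha⟩, inner_add_left, ih (by omega),
      hB.inner_eq_of_dynkinGraph_eq_pathGraph hG]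
    simp only [Fin.ext_iff]
    split_ifs <;> first | ring1 | (exfalso; omega)

theorem inner_partialSum_sub {a b : ℕ} (ha : a ≤ n) (hb : b ≤ n) (k : Fin n) :
    ⟪partialSum β b - partialSum β a, β k⟫ = r / 2 * ((if b = k + 1 then 1 else 0) -
      (if b = k then 1 else 0) - (if a = k + 1 then 1 else 0) + (if a = k then 1 else 0)) := by
  rw [inner_sub_left, hB.inner_partialSum hG ha, hB.inner_partialSum hG hb]
  ring

theorem partialSum_sub_mem {a b : ℕ} (hab : a < b) (hb : b ≤ n) :
    partialSum β b - partialSum β a ∈ Δ := by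
  induction b, hab using Nat.le_induction with
  | base => simpa [partialSum_succ ⟨a, hb⟩] using hB.mem ⟨a, hb⟩
  | succ b hab ih =>
    have hinner : ⟪β ⟨b, hb⟩, partialSum β b - partialSum β a⟫ = -(r / 2) := by
      rw [real_inner_comm, hB.inner_partialSum_sub hG (by omega) (by omega)]
      dsimp only
      split_ifs <;> first | ring1 | (exfalso; omega)
    convert hB.add_mem_of_inner_eq (hB.mem ⟨b, hb⟩) (ih (by omega)) hinner using 1
    rw [partialSum_succ ⟨b, hb⟩]
    abel

theorem exists_eq_partialSum_sub_of_isNatComb {φ : V} (hφ : φ ∈ Δ) (hpos : IsNatComb β φ) :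
    ∃ a b, a < b ∧ b ≤ n ∧ φ = partialSum β b - partialSum β a := by
  refine hB.isNatComb_induction
    (P := fun φ => ∃ a b, a < b ∧ b ≤ n ∧ φ = partialSum β b - partialSum β a) (fun t =>
      ⟨t, t + 1, by omega, t.isLt, by rw [partialSum_succ]; abel⟩) ?_ φ hφ hpos
  rintro φ hφ k hmem - ⟨a, b, hab, hb, hsub⟩
  -- `⟪φ - β k, β k⟫ = -(r / 2)` forces `β k` to prolong the segment `[a, b)` at one of its ends
  have h := hB.inner_eq_neg_half_of_add_mem hmem (hB.mem k) (by rwa [sub_add_cancel])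
  rw [hsub, hB.inner_partialSum_sub hG (by omega) hb] at h
  have hr := hB.r_pos hφ
  have hφ' : φ = partialSum β b - partialSum β a + (partialSum β (k + 1) - partialSum β k) := by
    rw [← hsub, partialSum_succ]; abel
  by_cases hbk : b = k
  · exact ⟨a, k + 1, by omega, k.isLt, by rw [hφ', hbk]; abel⟩
  by_cases hak : a = k + 1
  · exact ⟨k, b, by omega, hb, by rw [hφ', hak]; abel⟩
  exfalso
  simp only [hbk, hak, if_false] at h
  split_ifs at h <;> nlinarith

theorem exists_eq_partialSum_sub {φ : V} (hφ : φ ∈ Δ) :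
    ∃ a b, a ≠ b ∧ a ≤ n ∧ b ≤ n ∧ φ = partialSum β b - partialSum β a := by
  rcases hB.isNatComb_or φ hφ with h | h
  · obtain ⟨a, b, hab, hb, rfl⟩ := hB.exists_eq_partialSum_sub_of_isNatComb hG hφ h
    exact ⟨a, b, hab.ne, by omega, hb, rfl⟩
  · obtain ⟨a, b, hab, hb, hφ'⟩ :=
      hB.exists_eq_partialSum_sub_of_isNatComb hG (hB.neg_mem hφ) h
    exact ⟨b, a, hab.ne', hb, by omega, by rw [← neg_neg φ, hφ', neg_sub]⟩

-- In the standard model `β t = e t - e (t + 1)`, `partialSum β a = e 0 - e a` and the roots are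
-- the `e a - e b` with `a ≠ b`.
theorem eq_image_offDiag [DecidableEq V] :
    Δ = (univ : Finset (Fin (n + 1))).offDiag.image
      fun p => partialSum β p.2 - partialSum β p.1 := by
  ext φ
  simp only [mem_image, mem_offDiag, mem_univ, true_and, Prod.exists]
  constructor
  · intro hφ
    obtain ⟨a, b, hab, ha, hb, rfl⟩ := hB.exists_eq_partialSum_sub hG hφ
    exact ⟨⟨a, by omega⟩, ⟨b, by omega⟩, by simpa [Fin.ext_iff] using hab, rfl⟩
  · rintro ⟨a, b, hab, rfl⟩
    rcases lt_or_gt_of_ne (Fin.val_ne_of_ne hab) with h | h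
    · exact hB.partialSum_sub_mem hG h (by omega)
    · rw [← neg_sub]
      exact hB.neg_mem (hB.partialSum_sub_mem hG h (by omega))

theorem card_eq_of_dynkinGraph_eq_pathGraph : Δ.card = n * (n + 1) := by
  classical
  rw [hB.eq_image_offDiag hG, card_image_of_injOn (injOn_partialSum_sub hB.linearIndependent),
    offDiag_card, card_univ, Fintype.card_fin]
  have : (n + 1) * (n + 1) = n * (n + 1) + (n + 1) := by ring
  omega

end TypeA

section HighestRoot

variable [FiniteDimensional ℝ V] {ι : Type*} [Fintype ι] {Δ : Finset V} {α : ι → V} {r : ℝ}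
  (hB : SimplyLacedBase Δ α r)
include hB

theorem comp_equiv {κ : Type*} [Fintype κ] (e : κ ≃ ι) : SimplyLacedBase Δ (α ∘ e) r := by
  have hcomb {x : V} (hx : IsNatComb α x) : IsNatComb (α ∘ e) x := by
    obtain ⟨c, rfl⟩ := hx
    exact ⟨c ∘ e, (e.sum_comp fun i => (c i : ℝ) • α i).symm⟩
  exact ⟨hB.zero_notMem, hB.reflection_mem, hB.exists_int, hB.inner_self, hB.irreducible,
    fun k => hB.mem (e k), hB.linearIndependent.comp e e.injective,
    fun φ hφ => (hB.isNatComb_or φ hφ).imp hcomb hcomb⟩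

theorem card_eq_of_iso_pathGraph {N : ℕ} (e : SimpleGraph.pathGraph N ≃g dynkinGraph α) :
    Δ.card = N * (N + 1) := by
  refine (hB.comp_equiv e.toEquiv).card_eq_of_dynkinGraph_eq_pathGraph ?_
  ext s t
  rw [← e.map_adj_iff]
  simp [dynkinGraph_adj, e.injective.ne_iff]

variable {ψ : V} (hψ : ψ ∈ Δ) (hψhigh : ∀ φ ∈ Δ, IsNatComb α (ψ - φ))
include hψ hψhigh

theorem isNatComb_of_isHighest : IsNatComb α ψ := by
  rcases hB.isNatComb_or ψ hψ with h | h
  · exact h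
  · simpa using (hψhigh _ (hB.neg_mem hψ)).add h

theorem exists_inner_isHighest_ne_zero : ∃ i, ⟪α i, ψ⟫ ≠ 0 := by
  obtain ⟨m, hm⟩ := hB.isNatComb_of_isHighest hψ hψhigh
  by_contra! h
  have := hB.sum_coeff_mul_inner_eq hψ hm
  simp only [h, mul_zero, sum_const_zero] at this
  exact (hB.r_pos hψ).ne this

theorem inner_simple_isHighest_nonneg (i : ι) : 0 ≤ ⟪α i, ψ⟫ := by
  by_contra! hneg
  have hpos : 0 < ⟪-α i, ψ⟫ := by rwa [inner_neg_left, neg_pos]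
  have hne : -α i ≠ ψ := fun h => hB.zero_notMem <| by
    have := (hB.isNatComb_of_isHighest hψ hψhigh).eq_zero_of_neg hB.linearIndependent
      (by rw [← h, neg_neg]; exact isNatComb_self α i)
    exact this ▸ hψ
  have hmem := hB.sub_mem_of_inner_eq (hB.neg_mem (hB.mem i)) hψ
    (hB.inner_eq_half_of_pos (hB.neg_mem (hB.mem i)) hψ hne hpos)
  have := (isNatComb_self α i).eq_zero_of_neg hB.linearIndependent
    (by simpa using hψhigh _ hmem)
  exact hB.zero_notMem (this ▸ hB.mem i)

theorem inner_isHighest_eq_half [DecidableEq ι] {i j : ι} (hij : i ≠ j) (hi : ⟪α i, ψ⟫ ≠ 0)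
    (hj : ⟪α j, ψ⟫ ≠ 0) : ⟪α i, ψ⟫ = r / 2 := by
  have hne : α i ≠ ψ := fun h => hj <| le_antisymm
    (h ▸ real_inner_comm (α i) (α j) ▸ hB.inner_simple_nonpos hij)
    (hB.inner_simple_isHighest_nonneg hψ hψhigh j)
  exact hB.inner_eq_half_of_pos (hB.mem i) hψ hne
    (lt_of_le_of_ne (hB.inner_simple_isHighest_nonneg hψ hψhigh i) (Ne.symm hi))

section Coefficients

variable {m : ι → ℕ} (hm : ψ = ∑ i, (m i : ℝ) • α i)
include hm

theorem one_le_coeff_isHighest (k : ι) : 1 ≤ m k := by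
  by_contra! hk
  -- as `⟪α x, ψ⟫ ≥ 0`, a vanishing coefficient of `ψ` makes those of all neighbours vanish
  have hclosed : ∀ x ∈ {l | m l = 0}, ∀ y, (dynkinGraph α).Adj x y → y ∈ {l | m l = 0} := by
    intro x hx y hxy
    have h := hB.inner_simple_isHighest_nonneg hψ hψhigh x
    rw [hm, hB.inner_simple_sum_smul, Set.mem_ofPred_eq.mp hx, Nat.cast_zero, mul_zero,
      zero_sub, neg_nonneg] at h
    have hsum := le_antisymm (nonpos_of_mul_nonpos_right h (by linarith [hB.r_pos hψ]))
      (sum_nonneg fun l _ => Nat.cast_nonneg (m l))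
    exact_mod_cast (sum_eq_zero_iff_of_nonneg fun l _ => Nat.cast_nonneg (m l)).mp hsum y
      ((dynkinGraph α).mem_neighborFinset _ _ |>.mpr hxy)
  have hall := hB.preconnected.eq_univ_of_adj_closed (show k ∈ {l | m l = 0} by simpa using hk)
    hclosed
  apply hB.zero_notMem
  convert hψ
  rw [hm]
  refine (sum_eq_zero fun l _ => ?_).symm
  have hl : m l = 0 := Set.eq_univ_iff_forall.mp hall l
  simp [hl]

-- `r = ⟪ψ, ψ⟫ = ∑ m k ⟪α k, ψ⟫` has nonnegative terms, two of which are already at least `r / 2`.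
theorem inner_isHighest_eq_ite [DecidableEq ι] {i j : ι} (hij : i ≠ j) (hi : ⟪α i, ψ⟫ ≠ 0)
    (hj : ⟪α j, ψ⟫ ≠ 0) :
    m i = 1 ∧ ∀ k, ⟪α k, ψ⟫ = if k = i ∨ k = j then r / 2 else 0 := by
  have hr := hB.r_pos hψ
  have hterm (k : ι) : 0 ≤ (m k : ℝ) * ⟪α k, ψ⟫ :=
    mul_nonneg (Nat.cast_nonneg _) (hB.inner_simple_isHighest_nonneg hψ hψhigh k)
  have hle (s : Finset ι) : ∑ k ∈ s, (m k : ℝ) * ⟪α k, ψ⟫ ≤ r :=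
    hB.sum_coeff_mul_inner_eq hψ hm ▸
      sum_le_sum_of_subset_of_nonneg (subset_univ s) fun k _ _ => hterm k
  have hi' := hB.inner_isHighest_eq_half hψ hψhigh hij hi hj
  have hj' := hB.inner_isHighest_eq_half hψ hψhigh hij.symm hj hi
  have hm1 (k : ι) : (1 : ℝ) ≤ m k := by exact_mod_cast hB.one_le_coeff_isHighest hψ hψhigh hm k
  have hpair := hle {i, j}
  rw [sum_pair hij, hi', hj'] at hpair
  refine ⟨by exact_mod_cast (by nlinarith [hm1 i, hm1 j] : (m i : ℝ) = 1), fun k => ?_⟩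
  split_ifs with hk
  · rcases hk with rfl | rfl
    exacts [hi', hj']
  simp only [not_or] at hk
  have htriple := hle {k, i, j}
  rw [sum_insert (by simp [hk.1, hk.2]), sum_pair hij, hi', hj'] at htriple
  nlinarith [hB.inner_simple_isHighest_nonneg hψ hψhigh k, hm1 i, hm1 j, hm1 k]

theorem sum_coeff_neighborFinset_isHighest [DecidableEq ι] {i j : ι} (hij : i ≠ j)
    (hi : ⟪α i, ψ⟫ ≠ 0) (hj : ⟪α j, ψ⟫ ≠ 0) (k : ι) :
    ∑ l ∈ (dynkinGraph α).neighborFinset k, m l + (if k = i ∨ k = j then 1 else 0) = 2 * m k := by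
  have h := hB.inner_simple_sum_smul k fun l => (m l : ℝ)
  rw [← hm, (hB.inner_isHighest_eq_ite hψ hψhigh hm hij hi hj).2 k] at h
  have hr := hB.r_pos hψ
  have : (∑ l ∈ (dynkinGraph α).neighborFinset k, (m l : ℝ)) +
      (if k = i ∨ k = j then 1 else 0) = 2 * m k := by
    split_ifs at h ⊢ <;> nlinarith
  exact_mod_cast this

end Coefficients

theorem coloring_eq_of_inner_isHighest_ne_zero [DecidableEq ι] {h : ℕ}
    (hcard : Δ.card = h * Fintype.card ι) (heven : Even h) (C : (dynkinGraph α).Coloring Bool)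
    {i j : ι} (hi : ⟪α i, ψ⟫ ≠ 0) (hj : ⟪α j, ψ⟫ ≠ 0) : C i = C j := by
  by_cases hij : i = j
  · rw [hij]
  obtain ⟨m, hm⟩ := hB.isNatComb_of_isHighest hψ hψhigh
  obtain ⟨p⟩ := hB.preconnected i j
  obtain ⟨e⟩ := p.bypass_isPath.nonempty_iso_pathGraph hB.preconnected
    (hB.one_le_coeff_isHighest hψ hψhigh hm) hij
    (hB.inner_isHighest_eq_ite hψ hψhigh hm hij hi hj).1
    (hB.sum_coeff_neighborFinset_isHighest hψ hψhigh hm hij hi hj)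
  have hN : Fintype.card ι = p.bypass.length + 1 := by
    rw [← Fintype.card_congr e.toEquiv, Fintype.card_fin]
  have hh : h = p.bypass.length + 2 := by
    have := hB.card_eq_of_iso_pathGraph e
    rw [hcard, hN, mul_comm] at this
    simpa using Nat.eq_of_mul_eq_mul_left (Nat.succ_pos _) this
  have heven' : Even p.bypass.length := by
    rw [hh] at heven
    exact (Nat.even_add.mp heven).mpr even_two
  exact Bool.coe_iff_coe.mp ((C.even_length_iff_congr p.bypass).mp heven')

end HighestRoot

end SimplyLacedBase

end RootSystem

theorem stmt_9_general
    {V : Type*} [NormedAddCommGroup V] [InnerProductSpace ℝ V] [FiniteDimensional ℝ V]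
    (Δ : Finset V)
    -- `Δ` is an irreducible reduced simply-laced root system spanning `V`
    (hzero : (0 : V) ∉ Δ)
    (hrefl : ∀ φ ∈ Δ, ∀ θ ∈ Δ, rootReflection φ θ ∈ Δ)
    (hint : ∀ φ ∈ Δ, ∀ θ ∈ Δ, ∃ m : ℤ, 2 * ⟪φ, θ⟫ / ⟪φ, φ⟫ = (m : ℝ))
    (hlaced : ∀ φ ∈ Δ, ∀ θ ∈ Δ, ‖φ‖ = ‖θ‖)
    (hirred : ∀ A B : Set V, (Δ : Set V) = A ∪ B → (∀ a ∈ A, ∀ b ∈ B, ⟪a, b⟫ = 0) →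
      A = ∅ ∨ B = ∅)
    -- base of simple roots `Π = {α i : i ∈ I}`
    {ι : Type*} [Fintype ι] [DecidableEq ι]
    (α : ι → V) (hα : ∀ i, α i ∈ Δ) (hαind : LinearIndependent ℝ α)
    (hbase : ∀ φ ∈ Δ, (∃ c : ι → ℕ, φ = ∑ i, (c i : ℝ) • α i) ∨
      (∃ c : ι → ℕ, φ = -∑ i, (c i : ℝ) • α i))
    -- the Coxeter number `h = card Δ / ℓ`
    (h : ℕ) (hcox : Δ.card = h * Fintype.card ι)
    -- `h` is even
    (hheven : Even h)
    -- the highest root `ψ`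
    (ψ : V) (hψmem : ψ ∈ Δ)
    (hψhigh : ∀ φ ∈ Δ, ∃ c : ι → ℕ, ψ - φ = ∑ i, (c i : ℝ) • α i) :
    ∃! p : Finset ι × Finset ι,
      p.1 ∪ p.2 = Finset.univ ∧ Disjoint p.1 p.2 ∧
      (∀ i ∈ p.1, ∀ j ∈ p.1, i ≠ j → ⟪α i, α j⟫ = 0) ∧
      (∀ i ∈ p.2, ∀ j ∈ p.2, i ≠ j → ⟪α i, α j⟫ = 0) ∧
      (∀ i ∈ p.2, ⟪α i, ψ⟫ = 0) := by
  have hB : SimplyLacedBase Δ α ⟪ψ, ψ⟫ :=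
    ⟨hzero, hrefl, hint, fun φ hφ => by simp only [real_inner_self_eq_norm_sq, hlaced φ hφ ψ hψmem],
      hirred, hα, hαind, fun φ hφ => (hbase φ hφ).imp id fun ⟨c, hc⟩ => ⟨c, by rw [hc, neg_neg]⟩⟩
  obtain ⟨a, ha⟩ := hB.exists_inner_isHighest_ne_zero hψmem hψhigh
  obtain ⟨C⟩ := hB.isAcyclic.colorable_two
  have := SimpleGraph.existsUnique_partition_of_coloring hB.preconnected
    ((dynkinGraph α).recolorOfEquiv finTwoEquiv C) (S := {k | ⟪α k, ψ⟫ ≠ 0}) ha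
    fun x hx => hB.coloring_eq_of_inner_isHighest_ne_zero hψmem hψhigh hcox hheven _ hx ha
  simpa only [dynkinGraph_adj, not_and, not_not, Set.mem_ofPred_eq] using this

theorem stmt_9
    {V : Type*} [NormedAddCommGroup V] [InnerProductSpace ℝ V] [FiniteDimensional ℝ V]
    (Δ : Finset V)
    -- `Δ` is an irreducible reduced simply-laced root system spanning `V`
    (hspan : Submodule.span ℝ (Δ : Set V) = ⊤)
    (hzero : (0 : V) ∉ Δ)
    (hreduced : ∀ φ ∈ Δ, ∀ c : ℝ, c • φ ∈ Δ → c = 1 ∨ c = -1)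
    (hrefl : ∀ φ ∈ Δ, ∀ θ ∈ Δ, rootReflection φ θ ∈ Δ)
    (hint : ∀ φ ∈ Δ, ∀ θ ∈ Δ, ∃ m : ℤ, 2 * ⟪φ, θ⟫ / ⟪φ, φ⟫ = (m : ℝ))
    (hlaced : ∀ φ ∈ Δ, ∀ θ ∈ Δ, ‖φ‖ = ‖θ‖)
    (hirred : ∀ A B : Set V, (Δ : Set V) = A ∪ B → (∀ a ∈ A, ∀ b ∈ B, ⟪a, b⟫ = 0) →
      A = ∅ ∨ B = ∅)
    -- base of simple roots `Π = {α i : i ∈ I}`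
    {ι : Type*} [Fintype ι] [DecidableEq ι]
    (α : ι → V) (hα : ∀ i, α i ∈ Δ) (hαind : LinearIndependent ℝ α)
    (hbase : ∀ φ ∈ Δ, (∃ c : ι → ℕ, φ = ∑ i, (c i : ℝ) • α i) ∨
      (∃ c : ι → ℕ, φ = -∑ i, (c i : ℝ) • α i))
    -- the Coxeter number `h = card Δ / ℓ`
    (h : ℕ) (hcox : Δ.card = h * Fintype.card ι)
    -- `h` is even
    (hheven : Even h)
    -- the highest root `ψ`
    (ψ : V) (hψmem : ψ ∈ Δ)
    (hψhigh : ∀ φ ∈ Δ, ∃ c : ι → ℕ, ψ - φ = ∑ i, (c i : ℝ) • α i) :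
    ∃! p : Finset ι × Finset ι,
      p.1 ∪ p.2 = Finset.univ ∧ Disjoint p.1 p.2 ∧
      (∀ i ∈ p.1, ∀ j ∈ p.1, i ≠ j → ⟪α i, α j⟫ = 0) ∧
      (∀ i ∈ p.2, ∀ j ∈ p.2, i ≠ j → ⟪α i, α j⟫ = 0) ∧
      (∀ i ∈ p.2, ⟪α i, ψ⟫ = 0) :=
  stmt_9_general Δ hzero hrefl hint hlaced hirred α hα hαind hbase h hcox hheven ψ hψmem hψhigh
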